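/- Let H be a complex Hilbert space and T a bounded linear operator on H. Then T is normaloid (i.e. r(T) = ‖T‖) if and only if ‖T‖ ≤ ‖X T X⁻¹‖ for every bounded invertible operator X on H. -/

import Mathlib

/-!
Rota's similarity argument. The spectral radius is invariant under similarity and bounded by the
norm, so `r(T) ≤ ‖XTX⁻¹‖` for every invertible `X`. Conversely, if `r(T) < ρ` then `S = ρ⁻¹T` has
`r(S) < 1`, so by Gelfand's formula `∑ ‖Sⁿ‖²` converges and `P = ∑ (Sⁿ)* Sⁿ` satisfies
`P = 1 + S* P S`. Then `P ≥ 1` is invertible and, for `X = P^{1/2}`,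
`(XSX⁻¹)* (XSX⁻¹) = X⁻¹ (P - 1) X⁻¹ ≤ 1`, i.e. `‖XTX⁻¹‖ ≤ ρ`. Hence `r(T) = inf_X ‖XTX⁻¹‖`,
and `T` is normaloid exactly when this infimum is `‖T‖`.
-/

open ContinuousLinearMap Filter

variable {H : Type*} [NormedAddCommGroup H] [InnerProductSpace ℂ H] [CompleteSpace H]

/-- The modulus `|S| = (S*S)^(1/2)` of a bounded operator on a Hilbert space. -/
noncomputable def oMod (S : H →L[ℂ] H) : H →L[ℂ] H :=
  CFC.sqrt (ContinuousLinearMap.adjoint S * S)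

/-- Real powers of a (positive) operator, via the continuous functional calculus. -/
noncomputable def oPow (S : H →L[ℂ] H) (r : ℝ) : H →L[ℂ] H :=
  cfc (fun x : ℝ => x ^ r) S

/-- `V` is a partial isometry: it is isometric on the orthogonal complement of its kernel. -/
def IsPartialIsometry (V : H →L[ℂ] H) : Prop :=
  ∀ x ∈ (LinearMap.ker (V : H →ₗ[ℂ] H))ᗮ, ‖V x‖ = ‖x‖

/-- `V` implements the polar decomposition of `S`: it is a partial isometry with
`ker V = ker S` and `S = V * |S|`. -/
def IsPolarDecomp (S V : H →L[ℂ] H) : Prop :=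
  IsPartialIsometry V ∧ LinearMap.ker (V : H →ₗ[ℂ] H) = LinearMap.ker (S : H →ₗ[ℂ] H) ∧ S = V * oMod S

/-- The λ-Aluthge transform `|S|^λ V |S|^(1-λ)` of `S`, computed from a
partial isometry `V` in a polar decomposition `S = V|S|`. -/
noncomputable def aluthge (l : ℝ) (S V : H →L[ℂ] H) : H →L[ℂ] H :=
  oPow (oMod S) l * V * oPow (oMod S) (1 - l)

/-- `S` is a sequence of iterated λ-Aluthge transforms: each `S (m+1)` is the λ-Aluthge
transform of `S m` computed from some polar decomposition of `S m`. -/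
def IsAluthgeSeq (l : ℝ) (S : ℕ → H →L[ℂ] H) : Prop :=
  ∀ m, ∃ V : H →L[ℂ] H, IsPolarDecomp (S m) V ∧ S (m + 1) = aluthge l (S m) V

/-- The numerical radius `w(S) = sup { |⟨Sx, x⟩| : ‖x‖ = 1 }`. -/
noncomputable def numRadius (S : H →L[ℂ] H) : ℝ :=
  sSup {r : ℝ | ∃ x : H, ‖x‖ = 1 ∧ r = ‖(inner ℂ (S x) x : ℂ)‖}

/-- The real part `Re(S) = (S + S*)/2` of a bounded operator. -/
noncomputable def reOp (S : H →L[ℂ] H) : H →L[ℂ] H :=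
  (2 : ℂ)⁻¹ • (S + ContinuousLinearMap.adjoint S)

open CFC
open scoped NNReal ENNReal

section SpectralRadius

theorem spectralRadius_smul {𝕜 A : Type*} [NormedField 𝕜] [Ring A] [Algebra 𝕜 A] (k : 𝕜) (a : A) :
    spectralRadius 𝕜 (k • a) = ‖k‖₊ * spectralRadius 𝕜 a := by
  rcases eq_or_ne k 0 with rfl | hk
  · simp
  · lift k to 𝕜ˣ using hk.isUnit
    rw [spectralRadius, ← Units.smul_def, spectrum.unit_smul_eq_smul, ← Set.image_smul, iSup_image]
    simp [spectralRadius, ENNReal.mul_iSup, Units.smul_def]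

variable {A : Type*} [NormedRing A] [NormedAlgebra ℂ A] [CompleteSpace A]

theorem eventually_norm_pow_le_of_spectralRadius_lt (a : A) {q : ℝ≥0}
    (h : spectralRadius ℂ a < q) : ∀ᶠ n : ℕ in atTop, ‖a ^ n‖ ≤ q ^ n := by
  filter_upwards
    [(spectrum.pow_nnnorm_pow_one_div_tendsto_nhds_spectralRadius a).eventually_lt_const h,
      eventually_ne_atTop 0] with n hn hn0
  have := ENNReal.rpow_le_rpow hn.le (Nat.cast_nonneg n : (0 : ℝ) ≤ n)
  rw [← ENNReal.rpow_mul, one_div, inv_mul_cancel₀ (by exact_mod_cast hn0), ENNReal.rpow_one,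
    ENNReal.rpow_natCast] at this
  exact_mod_cast this

theorem summable_norm_pow_sq_of_spectralRadius_lt_one {a : A} (h : spectralRadius ℂ a < 1) :
    Summable fun n : ℕ => ‖a ^ n‖ ^ 2 := by
  obtain ⟨q, hq, hq1⟩ := ENNReal.lt_iff_exists_nnreal_btwn.mp h
  have hq_sq : (q : ℝ) ^ 2 < 1 := by
    have : (q : ℝ) < 1 := by exact_mod_cast hq1
    nlinarith [q.2]
  refine (summable_geometric_of_lt_one (sq_nonneg (q : ℝ)) hq_sq).of_norm_bounded_eventually_nat ?_
  filter_upwards [eventually_norm_pow_le_of_spectralRadius_lt a hq] with n hn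
  rw [Real.norm_of_nonneg (sq_nonneg _), ← pow_mul, mul_comm, pow_mul]
  gcongr

end SpectralRadius

section StarPowSum

theorem summable_star_pow_mul_pow {A : Type*} [NormedRing A] [StarRing A] [CStarRing A]
    [CompleteSpace A] {a : A} (h : Summable fun n : ℕ => ‖a ^ n‖ ^ 2) :
    Summable fun n : ℕ => star (a ^ n) * a ^ n :=
  h.of_norm_bounded fun n => by rw [CStarRing.norm_star_mul_self, sq]

theorem tsum_star_pow_mul_pow_eq_one_add {A : Type*} [Ring A] [StarRing A] [TopologicalSpace A]
    [IsTopologicalRing A] [T2Space A] {a : A}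
    (h : Summable fun n : ℕ => star (a ^ n) * a ^ n) :
    ∑' n : ℕ, star (a ^ n) * a ^ n = 1 + star a * (∑' n : ℕ, star (a ^ n) * a ^ n) * a := by
  rw [← h.tsum_mul_left, ← (h.mul_left _).tsum_mul_right, h.tsum_eq_zero_add]
  simp only [pow_zero, star_one, mul_one, pow_succ, star_mul, mul_assoc]

end StarPowSum

section CStarAlgebra

variable {A : Type*} [CStarAlgebra A]

theorem spectralRadius_le_nnnorm_of_cstarAlgebra (a : A) : spectralRadius ℂ a ≤ ‖a‖₊ := by
  nontriviality A
  exact spectrum.spectralRadius_le_nnnorm a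

theorem spectralRadius_ne_top_of_cstarAlgebra (a : A) : spectralRadius ℂ a ≠ ⊤ :=
  ne_top_of_le_ne_top ENNReal.coe_ne_top (spectralRadius_le_nnnorm_of_cstarAlgebra a)

theorem toReal_spectralRadius_le_norm (a : A) : (spectralRadius ℂ a).toReal ≤ ‖a‖ :=
  ENNReal.toReal_le_of_le_ofReal (norm_nonneg a)
    ((spectralRadius_le_nnnorm_of_cstarAlgebra a).trans_eq (by simp [ENNReal.ofReal]))

variable [PartialOrder A] [StarOrderedRing A]

theorem norm_units_conj_le_one_of_star_mul_le {a : A} (u : Aˣ)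
    (h : star a * (star (u : A) * u) * a ≤ star (u : A) * u) :
    ‖(u : A) * a * ↑u⁻¹‖ ≤ 1 := by
  have hstar : star ((u : A) * a * ↑u⁻¹) * ((u : A) * a * ↑u⁻¹) ≤ 1 :=
    calc star ((u : A) * a * ↑u⁻¹) * ((u : A) * a * ↑u⁻¹)
        = star (↑u⁻¹ : A) * (star a * (star (u : A) * u) * a) * ↑u⁻¹ := by
          simp only [star_mul, mul_assoc]
      _ ≤ star (↑u⁻¹ : A) * (star (u : A) * u) * ↑u⁻¹ := star_left_conjugate_le_conjugate h _
      _ = 1 := by rw [← mul_assoc, ← star_mul, Units.mul_inv, star_one, one_mul, Units.mul_inv]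
  rw [← sq_le_one_iff₀ (norm_nonneg _), sq, ← CStarRing.norm_star_mul_self]
  exact (CStarAlgebra.norm_le_one_iff_of_nonneg _ (star_mul_self_nonneg _)).mpr hstar

theorem exists_units_conj_norm_le_one_of_summable {a : A}
    (h : Summable fun n : ℕ => ‖a ^ n‖ ^ 2) :
    ∃ u : Aˣ, ‖(u : A) * a * ↑u⁻¹‖ ≤ 1 := by
  have hs := summable_star_pow_mul_pow h
  set p := ∑' n : ℕ, star (a ^ n) * a ^ n
  have hp_nonneg : 0 ≤ p := tsum_nonneg fun n => star_mul_self_nonneg _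
  have hp_eq : p = 1 + star a * p * a := tsum_star_pow_mul_pow_eq_one_add hs
  have hp_one : 1 ≤ p := by
    rw [hp_eq]
    exact le_add_of_nonneg_right (star_left_conjugate_nonneg hp_nonneg a)
  obtain ⟨u, hu⟩ := (isStrictlyPositive_one.of_le hp_one).sqrt.isUnit
  have hu_sq : star (u : A) * u = p := by
    rw [hu, (sqrt_nonneg p).isSelfAdjoint.star_eq, sqrt_mul_sqrt_self p]
  refine ⟨u, norm_units_conj_le_one_of_star_mul_le u ?_⟩
  rw [hu_sq]
  calc star a * p * a ≤ 1 + star a * p * a := le_add_of_nonneg_left zero_le_one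
    _ = p := hp_eq.symm

theorem exists_units_conj_norm_le_of_spectralRadius_lt {a : A} {ρ : ℝ≥0}
    (h : spectralRadius ℂ a < ρ) : ∃ u : Aˣ, ‖(u : A) * a * ↑u⁻¹‖ ≤ ρ := by
  have hρ : ρ ≠ 0 := by
    rintro rfl
    simp at h
  have hs : spectralRadius ℂ ((ρ : ℂ)⁻¹ • a) < 1 := by
    have hnorm : ‖((ρ : ℂ))⁻¹‖₊ = ρ⁻¹ := by simp
    rw [spectralRadius_smul, hnorm, ENNReal.coe_inv hρ, ← ENNReal.div_eq_inv_mul,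
      ENNReal.div_lt_iff (.inl (by exact_mod_cast hρ)) (.inl ENNReal.coe_ne_top), one_mul]
    exact h
  obtain ⟨u, hu⟩ := exists_units_conj_norm_le_one_of_summable
    (summable_norm_pow_sq_of_spectralRadius_lt_one hs)
  refine ⟨u, ?_⟩
  have hconj : (u : A) * a * ↑u⁻¹ = (ρ : ℂ) • ((u : A) * ((ρ : ℂ)⁻¹ • a) * ↑u⁻¹) := by
    rw [mul_smul_comm, smul_mul_assoc, smul_inv_smul₀ (by exact_mod_cast hρ)]
  rw [hconj, norm_smul, Complex.norm_real, Real.norm_of_nonneg ρ.coe_nonneg]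
  simpa using mul_le_mul_of_nonneg_left hu ρ.coe_nonneg

end CStarAlgebra

/-- `T` is normaloid iff `‖T‖ ≤ ‖X T X⁻¹‖` for every invertible `X`. -/
theorem normaloid_iff_norm_le_norm_conj (T : H →L[ℂ] H) :
    (spectralRadius ℂ T).toReal = ‖T‖ ↔
      ∀ X : (H →L[ℂ] H)ˣ,
        ‖T‖ ≤ ‖(X : H →L[ℂ] H) * T * (↑X⁻¹ : H →L[ℂ] H)‖ := by
  constructor
  · intro h X
    have hconj : spectralRadius ℂ ((X : H →L[ℂ] H) * T * ↑X⁻¹) = spectralRadius ℂ T := by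
      simp [spectralRadius]
    calc ‖T‖ = (spectralRadius ℂ ((X : H →L[ℂ] H) * T * ↑X⁻¹)).toReal := by rw [hconj, h]
      _ ≤ _ := toReal_spectralRadius_le_norm _
  · intro hT
    refine le_antisymm (toReal_spectralRadius_le_norm T)
      (le_of_forall_gt_imp_ge_of_dense fun c hc => ?_)
    have hc' : spectralRadius ℂ T < c.toNNReal :=
      (ENNReal.lt_ofReal_iff_toReal_lt (spectralRadius_ne_top_of_cstarAlgebra T)).mpr hc
    obtain ⟨X, hX⟩ := exists_units_conj_norm_le_of_spectralRadius_lt hc'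
    exact (hT X).trans (hX.trans_eq (Real.coe_toNNReal c (ENNReal.toReal_nonneg.trans hc.le)))
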